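/- Let Φ(y) = (2π)^{−1/2} ∫_{−∞}^{y} e^{−t²/2} dt be the standard normal distribution function, and let q : (0,1) → ℝ be any function satisfying Φ(q(s)) = 1 − s for all s ∈ (0,1); then e^{q(s)} is the upper quantile function G^{-1}(1−s) of the standard lognormal distribution G(y) = Φ(log y). For every x > 0: lim_{s→0⁺} (2 log(1/s))^{1/2}·( (2 log(1/s))^{1/2}·( e^{q(s)} − e^{q(xs)} )·e^{−q(s)} − log x ) = −(log x)²/2 (the expression being taken for s small enough that xs ∈ (0,1)). -/

import Mathlib

/-!
Let `T y = ∫_y^∞ e^{-t²/2} dt`, so that `T (q s) = √(2π) s`, and let `h = e^{-y²/2} / T`, the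
derivative of `-log T`. Mills' inequalities give `y ≤ h y ≤ y + 1/y`. With `b = q s` and
`a = q (x s)`, the mean value theorem gives `h ξ · (b - a) = log x` for some `ξ` between `a` and
`b`, while `r = (2 log (1/s))^{1/2} = b + o(1)` because `r² = b² + 2 log (h b) + log (2π)`.
Hence `r - h ξ → 0`, so `r (b - a) → log x` and `r (r (b - a) - log x) = r (b - a) (r - h ξ) → 0`;
the expansion `1 - e^{-d} = d - d²/2 + O(d³)` then produces the limit `-(log x)²/2`.
-/

open Filter Topology Set MeasureTheory Real

lemma abs_sqrt_sub_le (u : ℝ) {y : ℝ} (hy : 0 < y) : |√u - y| ≤ |u - y ^ 2| / y := by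
  rw [le_div_iff₀ hy]
  rcases le_or_gt 0 u with hu | hu
  · have h : (√u - y) * (√u + y) = u - y ^ 2 := by linear_combination sq_sqrt hu
    rw [← h, abs_mul, abs_of_pos (by positivity : 0 < √u + y)]
    exact mul_le_mul_of_nonneg_left (by linarith [sqrt_nonneg u]) (abs_nonneg _)
  · rw [sqrt_eq_zero'.2 hu.le, abs_of_neg (by linarith), abs_of_neg (by nlinarith)]
    nlinarith

lemma Antitone.tendsto_atTop_of_tendsto_zero {α : Type*} {l : Filter α} {f : ℝ → ℝ}
    (hf : Antitone f) (hpos : ∀ y, 0 < f y) {g : α → ℝ}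
    (hg : Tendsto (fun s => f (g s)) l (𝓝 0)) : Tendsto g l atTop :=
  tendsto_atTop.2 fun M =>
    (hg.eventually (gt_mem_nhds (hpos M))).mono fun _ hs => (hf.reflect_lt hs).le

lemma exists_mem_uIcc_hasDerivAt_mul_eq {f f' : ℝ → ℝ} (hf : ∀ x, HasDerivAt f (f' x) x)
    (a b : ℝ) : ∃ c ∈ uIcc a b, f' c * (b - a) = f b - f a := by
  wlog hab : a ≤ b generalizing a b
  · obtain ⟨c, hc, h⟩ := this b a (le_of_not_ge hab)
    exact ⟨c, uIcc_comm a b ▸ hc, by linarith⟩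
  rcases hab.eq_or_lt with rfl | hlt
  · exact ⟨a, left_mem_uIcc, by simp⟩
  obtain ⟨c, hc, h⟩ := exists_hasDerivAt_eq_slope f f' hlt
    (fun x _ => (hf x).continuousAt.continuousWithinAt) (fun x _ => hf x)
  refine ⟨c, Icc_subset_uIcc (Ioo_subset_Icc_self hc), ?_⟩
  rw [h, div_mul_cancel₀ _ (sub_ne_zero.2 hlt.ne')]

lemma abs_exp_sub_one_sub_sub_sq_div_two_le {u : ℝ} (hu : |u| ≤ 1) :
    |exp u - 1 - u - u ^ 2 / 2| ≤ |u| ^ 3 := by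
  have h := exp_bound hu (n := 3) (by norm_num)
  norm_num [Finset.sum_range_succ, Nat.factorial] at h
  calc |exp u - 1 - u - u ^ 2 / 2| = |exp u - (1 + u + u ^ 2 / 2)| := by ring_nf
    _ ≤ |u| ^ 3 * (2 / 9) := h
    _ ≤ |u| ^ 3 := by nlinarith [pow_nonneg (abs_nonneg u) 3]

section Asymptotics

variable {α : Type*} {l : Filter α} {r d h : α → ℝ} {L : ℝ}

lemma tendsto_mul_mul_one_sub_exp_neg_sub (hd : Tendsto d l (𝓝 0))
    (hrd : Tendsto (fun s => r s * d s) l (𝓝 L))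
    (hrdL : Tendsto (fun s => r s * (r s * d s - L)) l (𝓝 0)) :
    Tendsto (fun s => r s * (r s * (1 - exp (-d s)) - L)) l (𝓝 (-L ^ 2 / 2)) := by
  set ρ : α → ℝ := fun s => r s ^ 2 * (exp (-d s) - 1 - -d s - (-d s) ^ 2 / 2)
  have hρ : Tendsto ρ l (𝓝 0) := by
    have hd' : Tendsto (fun s => |d s|) l (𝓝 0) := by simpa using hd.abs
    refine squeeze_zero_norm' ?_ (by simpa using (hrd.pow 2).mul hd')
    filter_upwards [hd'.eventually (eventually_le_nhds one_pos)] with s hs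
    calc ‖ρ s‖ = r s ^ 2 * |exp (-d s) - 1 - -d s - (-d s) ^ 2 / 2| := by
          rw [Real.norm_eq_abs, abs_mul, abs_pow, sq_abs]
      _ ≤ r s ^ 2 * |d s| ^ 3 := by
          gcongr
          simpa only [abs_neg] using abs_exp_sub_one_sub_sub_sq_div_two_le (u := -d s)
            (by rwa [abs_neg])
      _ = (r s * d s) ^ 2 * |d s| := by rw [mul_pow, ← sq_abs (d s)]; ring
  convert (hrdL.sub ((hrd.pow 2).div_const 2)).sub hρ using 2 <;> ring

lemma tendsto_zero_of_mul_eq (hh : Tendsto h l atTop) (hL : ∀ᶠ s in l, h s * d s = L) :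
    Tendsto d l (𝓝 0) := by
  have h0 : Tendsto (fun s => L * (h s)⁻¹) l (𝓝 0) := by
    simpa using hh.inv_tendsto_atTop.const_mul L
  refine h0.congr' ?_
  filter_upwards [hL, hh.eventually_gt_atTop 0] with s hs hpos
  rw [← hs]; field_simp

lemma tendsto_mul_mul_one_sub_exp_neg_of_mul_eq (hh : Tendsto h l atTop)
    (hrh : Tendsto (fun s => r s - h s) l (𝓝 0)) (hL : ∀ᶠ s in l, h s * d s = L) :
    Tendsto (fun s => r s * (r s * (1 - exp (-d s)) - L)) l (𝓝 (-L ^ 2 / 2)) := by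
  have hrd : Tendsto (fun s => r s * d s) l (𝓝 L) := by
    have h1 : Tendsto (fun s => (1 + (r s - h s) * (h s)⁻¹) * L) l (𝓝 L) := by
      simpa using ((hrh.mul hh.inv_tendsto_atTop).const_add 1).mul_const L
    refine h1.congr' ?_
    filter_upwards [hL, hh.eventually_gt_atTop 0] with s hs hpos
    rw [← hs]; field_simp; ring
  have hrdL : Tendsto (fun s => r s * (r s * d s - L)) l (𝓝 0) := by
    have h0 : Tendsto (fun s => r s * d s * (r s - h s)) l (𝓝 0) := by
      simpa using hrd.mul hrh
    refine h0.congr' ?_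
    filter_upwards [hL] with s hs
    rw [← hs]; ring
  exact tendsto_mul_mul_one_sub_exp_neg_sub (tendsto_zero_of_mul_eq hh hL) hrd hrdL

end Asymptotics

lemma exp_neg_sq_div_two_eq (t : ℝ) : exp (-t ^ 2 / 2) = exp (-(1 / 2) * t ^ 2) := by
  ring_nf

lemma integrable_exp_neg_sq_div_two : Integrable fun t : ℝ => exp (-t ^ 2 / 2) := by
  simp only [exp_neg_sq_div_two_eq]; exact integrable_exp_neg_mul_sq (by norm_num)

lemma integral_exp_neg_sq_div_two : ∫ t, exp (-t ^ 2 / 2) = √(2 * π) := by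
  simp only [exp_neg_sq_div_two_eq]; rw [integral_gaussian]; ring_nf

lemma tendsto_exp_neg_sq_div_two_atTop : Tendsto (fun t : ℝ => exp (-t ^ 2 / 2)) atTop (𝓝 0) :=
  tendsto_exp_atBot.comp <|
    (tendsto_neg_atTop_atBot.comp (tendsto_pow_atTop two_ne_zero)).atBot_div_const two_pos

lemma hasDerivAt_exp_neg_sq_div_two (t : ℝ) :
    HasDerivAt (fun t => exp (-t ^ 2 / 2)) (-t * exp (-t ^ 2 / 2)) t :=
  ((hasDerivAt_pow 2 t).fun_neg.div_const 2).exp.congr_deriv (by push_cast; ring)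

lemma integral_Ioi_mul_exp_neg_sq_div_two (y : ℝ) :
    ∫ t in Ioi y, t * exp (-t ^ 2 / 2) = exp (-y ^ 2 / 2) := by
  have hint : Integrable fun t : ℝ => t * exp (-t ^ 2 / 2) := by
    simp only [exp_neg_sq_div_two_eq]; exact integrable_mul_exp_neg_mul_sq (by norm_num)
  rw [integral_Ioi_of_hasDerivAt_of_tendsto'
    (fun t _ => by simpa using (hasDerivAt_exp_neg_sq_div_two t).fun_neg) hint.integrableOn
    (by simpa using tendsto_exp_neg_sq_div_two_atTop.neg)]
  ring

noncomputable def gaussTail (y : ℝ) : ℝ := ∫ t in Ioi y, exp (-t ^ 2 / 2)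

lemma integral_Iic_exp_neg_sq_div_two (y : ℝ) :
    ∫ t in Iic y, exp (-t ^ 2 / 2) = √(2 * π) - gaussTail y := by
  rw [← integral_exp_neg_sq_div_two, ← intervalIntegral.integral_Iic_add_Ioi
    integrable_exp_neg_sq_div_two.integrableOn integrable_exp_neg_sq_div_two.integrableOn,
    gaussTail, add_sub_cancel_right]

lemma gaussTail_eq_of_eq_one_sub {Φ : ℝ → ℝ}
    (hΦ : ∀ y, Φ y = (2 * π) ^ (-(1 / 2) : ℝ) * ∫ t in Iic y, exp (-t ^ 2 / 2)) {y s : ℝ}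
    (h : Φ y = 1 - s) : gaussTail y = √(2 * π) * s := by
  rw [hΦ, integral_Iic_exp_neg_sq_div_two, rpow_neg (by positivity), ← sqrt_eq_rpow] at h
  have : 0 < √(2 * π) := by positivity
  field_simp at h
  linarith

lemma hasDerivAt_gaussTail (y : ℝ) : HasDerivAt gaussTail (-exp (-y ^ 2 / 2)) y := by
  have h : gaussTail = fun z => gaussTail 0 - ∫ t in (0:ℝ)..z, exp (-t ^ 2 / 2) := by
    funext z
    rw [gaussTail, gaussTail, ← intervalIntegral.integral_Ioi_sub_Ioi'
      integrable_exp_neg_sq_div_two.integrableOn integrable_exp_neg_sq_div_two.integrableOn,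
      sub_sub_cancel]
  rw [h]
  exact ((by fun_prop : Continuous fun t : ℝ => exp (-t ^ 2 / 2)).integral_hasStrictDerivAt
    0 y).hasDerivAt.const_sub _

lemma gaussTail_antitone : Antitone gaussTail := fun _ _ h =>
  setIntegral_mono_set integrable_exp_neg_sq_div_two.integrableOn
    (Eventually.of_forall fun _ => (exp_pos _).le) (Ioi_subset_Ioi h).eventuallyLE

lemma mul_gaussTail_le (y : ℝ) : y * gaussTail y ≤ exp (-y ^ 2 / 2) := by
  rw [gaussTail, ← integral_const_mul, ← integral_Ioi_mul_exp_neg_sq_div_two]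
  refine setIntegral_mono_on (integrable_exp_neg_sq_div_two.const_mul y).integrableOn ?_
    measurableSet_Ioi fun t ht => mul_le_mul_of_nonneg_right (le_of_lt ht) (exp_pos _).le
  simp only [exp_neg_sq_div_two_eq]
  exact (integrable_mul_exp_neg_mul_sq (by norm_num)).integrableOn

/-- Integrate `e^{-t²/2} (1 - 2 / (1 + t²)²) ≤ e^{-t²/2}` over `(y, ∞)`: the left side is the
derivative of `-t / (1 + t²) · e^{-t²/2}`. -/
lemma mul_exp_le_one_add_sq_mul_gaussTail (y : ℝ) :
    y * exp (-y ^ 2 / 2) ≤ (1 + y ^ 2) * gaussTail y := by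
  set G : ℝ → ℝ := fun t => -(t / (1 + t ^ 2) * exp (-t ^ 2 / 2))
  set g : ℝ → ℝ := fun t => exp (-t ^ 2 / 2) * (1 - 2 / (1 + t ^ 2) ^ 2)
  have hG (t : ℝ) : HasDerivAt G (g t) t := by
    have h1 : HasDerivAt (fun t : ℝ => 1 + t ^ 2) (2 * t) t := by
      simpa using (hasDerivAt_pow 2 t).const_add 1
    refine (((hasDerivAt_id' t).fun_div h1 (by positivity)).mul
      (hasDerivAt_exp_neg_sq_div_two t)).neg.congr_deriv ?_
    simp only [g]
    field_simp
    ring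
  have hfrac (t : ℝ) : |t / (1 + t ^ 2)| ≤ 1 := by
    rw [abs_div, abs_of_pos (by positivity : (0:ℝ) < 1 + t ^ 2), div_le_one (by positivity)]
    nlinarith [sq_nonneg (|t| - 1), sq_abs t, abs_nonneg t]
  have hg_le (t : ℝ) : g t ≤ exp (-t ^ 2 / 2) :=
    mul_le_of_le_one_right (exp_pos _).le (by simp only [sub_le_self_iff]; positivity)
  have hg : Integrable g := by
    refine integrable_exp_neg_sq_div_two.mono' (by fun_prop) (Eventually.of_forall fun t => ?_)
    have h : 2 / (1 + t ^ 2) ^ 2 ≤ 2 :=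
      div_le_self zero_le_two (one_le_pow₀ (by nlinarith [sq_nonneg t]))
    rw [norm_mul, Real.norm_of_nonneg (exp_pos _).le]
    refine mul_le_of_le_one_right (exp_pos _).le (abs_le.2 ⟨?_, ?_⟩) <;>
      nlinarith [(by positivity : 0 ≤ 2 / (1 + t ^ 2) ^ 2)]
  have hG_lim : Tendsto G atTop (𝓝 0) := by
    refine squeeze_zero_norm (fun t => ?_) tendsto_exp_neg_sq_div_two_atTop
    rw [norm_neg, norm_mul, Real.norm_of_nonneg (exp_pos _).le]
    exact mul_le_of_le_one_left (exp_pos _).le (hfrac t)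
  have h : ∫ t in Ioi y, g t ≤ gaussTail y :=
    setIntegral_mono hg.integrableOn integrable_exp_neg_sq_div_two.integrableOn hg_le
  rw [integral_Ioi_of_hasDerivAt_of_tendsto' (fun t _ => hG t) hg.integrableOn hG_lim] at h
  simp only [G, zero_sub, neg_neg] at h
  rwa [div_mul_eq_mul_div, div_le_iff₀ (by positivity), mul_comm (gaussTail y)] at h

lemma gaussTail_pos (y : ℝ) : 0 < gaussTail y := by
  have h := mul_exp_le_one_add_sq_mul_gaussTail (max y 1)
  have : 0 < max y 1 * exp (-max y 1 ^ 2 / 2) := mul_pos (by positivity) (exp_pos _)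
  exact (pos_of_mul_pos_right (this.trans_le h) (by positivity)).trans_le
    (gaussTail_antitone (le_max_left y 1))

noncomputable def gaussHazard (y : ℝ) : ℝ := exp (-y ^ 2 / 2) / gaussTail y

lemma gaussHazard_pos (y : ℝ) : 0 < gaussHazard y := div_pos (exp_pos _) (gaussTail_pos y)

lemma le_gaussHazard (y : ℝ) : y ≤ gaussHazard y :=
  (le_div_iff₀ (gaussTail_pos y)).2 (mul_gaussTail_le y)

lemma gaussHazard_le {y : ℝ} (hy : 0 < y) : gaussHazard y ≤ y + y⁻¹ := by
  rw [gaussHazard, div_le_iff₀ (gaussTail_pos y), ← mul_le_mul_iff_right₀ hy]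
  calc y * exp (-y ^ 2 / 2) ≤ (1 + y ^ 2) * gaussTail y := mul_exp_le_one_add_sq_mul_gaussTail y
    _ = y * ((y + y⁻¹) * gaussTail y) := by field_simp; ring

lemma tendsto_gaussHazard_sub_atTop : Tendsto (fun y => gaussHazard y - y) atTop (𝓝 0) := by
  refine squeeze_zero' (Eventually.of_forall fun y => sub_nonneg.2 (le_gaussHazard y)) ?_
    tendsto_inv_atTop_zero
  filter_upwards [eventually_gt_atTop 0] with y hy
  linarith [gaussHazard_le hy]

lemma hasDerivAt_neg_log_gaussTail (y : ℝ) :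
    HasDerivAt (fun y => -log (gaussTail y)) (gaussHazard y) y := by
  refine ((hasDerivAt_gaussTail y).log (gaussTail_pos y).ne').fun_neg.congr_deriv ?_
  rw [gaussHazard, neg_div, neg_neg]

lemma log_div_gaussTail {c : ℝ} (hc : 0 < c) (y : ℝ) :
    log (c / gaussTail y) = log c + y ^ 2 / 2 + log (gaussHazard y) := by
  have h : c / gaussTail y = c * exp (y ^ 2 / 2) * gaussHazard y := by
    rw [gaussHazard, mul_div_assoc', mul_assoc, ← exp_add, neg_div, add_neg_cancel, exp_zero,
      mul_one]
  rw [h, log_mul (by positivity) (gaussHazard_pos y).ne', log_mul hc.ne' (exp_pos _).ne', log_exp]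

/-- `2 log (c / T y) = y² + 2 log c + 2 log (gaussHazard y)` with `y ≤ gaussHazard y ≤ 2y`,
so the square root is `y + O(log y / y)`. -/
lemma tendsto_sqrt_two_mul_log_div_gaussTail_sub {c : ℝ} (hc : 0 < c) :
    Tendsto (fun y => √(2 * log (c / gaussTail y)) - y) atTop (𝓝 0) := by
  have hlog :
      Tendsto (fun y => (2 * |log c| + 2 * log 2) * y⁻¹ + 2 * (log y / y)) atTop (𝓝 0) := by
    simpa using (tendsto_inv_atTop_zero.const_mul _).add
      (isLittleO_log_id_atTop.tendsto_div_nhds_zero.const_mul 2)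
  refine squeeze_zero_norm' ?_ hlog
  filter_upwards [eventually_ge_atTop 1] with y hy
  have hy0 : 0 < y := by linarith
  have hlow : 0 ≤ log (gaussHazard y) := log_nonneg (hy.trans (le_gaussHazard y))
  have hupp : log (gaussHazard y) ≤ log 2 + log y := by
    rw [← log_mul two_ne_zero hy0.ne']
    refine log_le_log (gaussHazard_pos y) ((gaussHazard_le hy0).trans ?_)
    linarith [inv_le_one_of_one_le₀ hy]
  calc ‖√(2 * log (c / gaussTail y)) - y‖ ≤ |2 * log (c / gaussTail y) - y ^ 2| / y :=
        abs_sqrt_sub_le _ hy0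
    _ = |2 * log c + 2 * log (gaussHazard y)| / y := by rw [log_div_gaussTail hc]; ring_nf
    _ ≤ (2 * |log c| + 2 * log 2 + 2 * log y) / y := by
        gcongr
        refine (abs_add_le _ _).trans ?_
        rw [abs_mul, abs_two, abs_of_nonneg (by positivity : 0 ≤ 2 * log (gaussHazard y))]
        linarith
    _ = _ := by ring

lemma tendsto_mul_mul_one_sub_exp_neg_of_log_gaussTail_sub_eq {α : Type*} {l : Filter α}
    {a b r : α → ℝ} {L : ℝ} (ha : Tendsto a l atTop) (hb : Tendsto b l atTop)
    (hL : ∀ᶠ s in l, log (gaussTail (a s)) - log (gaussTail (b s)) = L)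
    (hr : Tendsto (fun s => r s - b s) l (𝓝 0)) :
    Tendsto (fun s => r s * (r s * (1 - exp (-(b s - a s))) - L)) l (𝓝 (-L ^ 2 / 2)) := by
  choose ξ hξ hξL using fun s =>
    exists_mem_uIcc_hasDerivAt_mul_eq hasDerivAt_neg_log_gaussTail (a s) (b s)
  have hξ_top : Tendsto ξ l atTop :=
    tendsto_atTop_mono (fun s => (hξ s).1) (tendsto_inf_atTop _ ha hb)
  have hh : Tendsto (fun s => gaussHazard (ξ s)) l atTop :=
    tendsto_atTop_mono (fun s => le_gaussHazard (ξ s)) hξ_top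
  have hhL : ∀ᶠ s in l, gaussHazard (ξ s) * (b s - a s) = L :=
    hL.mono fun s hs => by rw [hξL]; linarith
  have hbξ : Tendsto (fun s => b s - ξ s) l (𝓝 0) :=
    squeeze_zero_norm (fun s => abs_sub_right_of_mem_uIcc (hξ s))
      (by simpa using (tendsto_zero_of_mul_eq hh hhL).abs)
  refine tendsto_mul_mul_one_sub_exp_neg_of_mul_eq hh ?_ hhL
  simpa using (hr.add hbξ).sub (tendsto_gaussHazard_sub_atTop.comp hξ_top)

/-- Second order condition for the standard lognormal quantile function
`G⁻¹(1−s) = e^{q(s)}`, where `q` is the standard normal upper quantile. -/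
theorem lognormal_second_order
    (Φ : ℝ → ℝ)
    (hΦ : ∀ y : ℝ, Φ y = (2 * Real.pi) ^ (-(1/2) : ℝ) * ∫ t in Set.Iic y, Real.exp (-t ^ 2 / 2))
    (q : ℝ → ℝ)
    (hq : ∀ s ∈ Set.Ioo (0:ℝ) 1, Φ (q s) = 1 - s)
    (x : ℝ) (hx : 0 < x) :
    Tendsto (fun s => (2 * Real.log (1 / s)) ^ ((1:ℝ)/2) *
        ((2 * Real.log (1 / s)) ^ ((1:ℝ)/2) * (Real.exp (q s) - Real.exp (q (x * s)))
            * Real.exp (-(q s)) - Real.log x))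
      (𝓝[>] 0) (𝓝 (-(Real.log x) ^ 2 / 2)) := by
  have hT (s) (hs : s ∈ Ioo (0:ℝ) 1) := gaussTail_eq_of_eq_one_sub hΦ (hq s hs)
  have hs : ∀ᶠ s in 𝓝[>] (0:ℝ), s ∈ Ioo 0 1 := Ioo_mem_nhdsGT one_pos
  have hmul : Tendsto (fun s => x * s) (𝓝[>] 0) (𝓝[>] 0) :=
    tendsto_iff_comap.2 (comap_mulLeft_nhdsGT_zero hx).ge
  have hb : Tendsto q (𝓝[>] 0) atTop := by
    refine gaussTail_antitone.tendsto_atTop_of_tendsto_zero gaussTail_pos ?_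
    have h0 : Tendsto (fun s : ℝ => √(2 * π) * s) (𝓝[>] 0) (𝓝 0) :=
      ((continuous_const_mul _).tendsto' 0 0 (mul_zero _)).mono_left nhdsWithin_le_nhds
    exact h0.congr' (by filter_upwards [hs] with s hs using (hT s hs).symm)
  have ha : Tendsto (fun s => q (x * s)) (𝓝[>] 0) atTop := hb.comp hmul
  have hL : ∀ᶠ s in 𝓝[>] 0, log (gaussTail (q (x * s))) - log (gaussTail (q s)) = log x := by
    filter_upwards [hs, hmul.eventually hs] with s hs hxs
    rw [hT s hs, hT _ hxs, log_mul (by positivity) hs.1.ne', log_mul (by positivity) hxs.1.ne',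
      log_mul hx.ne' hs.1.ne']
    ring
  have hr : Tendsto (fun s => √(2 * log (1 / s)) - q s) (𝓝[>] 0) (𝓝 0) := by
    refine ((tendsto_sqrt_two_mul_log_div_gaussTail_sub (c := √(2 * π)) (by positivity)).comp
      hb).congr' ?_
    filter_upwards [hs] with s hs
    rw [Function.comp_apply, hT s hs, div_mul_cancel_left₀ (by positivity), one_div]
  simp only [← sqrt_eq_rpow]
  refine (tendsto_mul_mul_one_sub_exp_neg_of_log_gaussTail_sub_eq ha hb hL hr).congr fun s => ?_
  rw [mul_assoc (√_), sub_mul, ← exp_add, ← exp_add, add_neg_cancel, exp_zero, ← sub_eq_add_neg,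
    neg_sub]
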